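/- Let P be a set of n = 2m+1 points in convex position. Then any plane almost perfect matching on P can be transformed by at most 2n flips into the matching M_conv all of whose edges are edges of the convex hull boundary; consequently the diameter of the flip graph GM_P is O(n). -/

import Mathlib

open Finset

abbrev Pt : Type := ℝ × ℝ

def NoThreeCollinear (P : Finset Pt) : Prop :=
  ∀ p ∈ P, ∀ q ∈ P, ∀ r ∈ P, p ≠ q → p ≠ r → q ≠ r →
    ¬ Collinear ℝ ({p, q, r} : Set Pt)

/-- The open segment associated to an unordered pair of points. -/
def eseg (e : Sym2 Pt) : Set Pt :=
  Sym2.lift ⟨fun p q => openSegment ℝ p q, fun p q => openSegment_symm (𝕜 := ℝ) p q⟩ e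

/-- `M` is a plane almost perfect matching with `m` edges on the point set `P`:
`m` segments with pairwise distinct endpoints in `P`, no two of which cross. -/
structure IsPAPM (P : Finset Pt) (m : ℕ) (M : Finset (Sym2 Pt)) : Prop where
  card_eq : M.card = m
  endpoints_mem : ∀ e ∈ M, ∀ p ∈ e, p ∈ P
  not_isDiag : ∀ e ∈ M, ¬ e.IsDiag
  pairwise_disjoint_endpoints : ∀ e ∈ M, ∀ f ∈ M, e ≠ f → ∀ p, p ∈ e → p ∉ f
  plane : ∀ e ∈ M, ∀ f ∈ M, e ≠ f → eseg e ∩ eseg f = ∅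

/-- `p` is the unmatched point of the matching `M` on `P`. -/
def Unmatched (P : Finset Pt) (M : Finset (Sym2 Pt)) (p : Pt) : Prop :=
  p ∈ P ∧ ∀ e ∈ M, p ∉ e

/-- The flip graph `GM_P`: vertices are the plane almost perfect matchings on `P`,
two matchings being adjacent iff they share exactly `m - 1` edges. -/
def GM (P : Finset Pt) (m : ℕ) : SimpleGraph {M : Finset (Sym2 Pt) // IsPAPM P m M} where
  Adj M₁ M₂ := M₁ ≠ M₂ ∧ (M₁.1 ∩ M₂.1).card = m - 1
  symm := by
    constructor
    intro a b h
    exact ⟨h.1.symm, by rw [Finset.inter_comm]; exact h.2⟩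
  loopless := ⟨fun a h => h.1 rfl⟩

/-- A finite point set is in convex position if no point lies in the
convex hull of the others. -/
def ConvexPosition (P : Finset Pt) : Prop :=
  ∀ p ∈ P, p ∉ convexHull ℝ ((P.erase p : Finset Pt) : Set Pt)

/-!
Enumerate `P` counterclockwise as `σ 0, …, σ 2m`, starting from its lexicographically least
point and sorting the others by slope, and let `M_conv` pair `σ (2j+1)` with `σ (2j+2)`. The chord
`σ a σ b` crosses no chord with both endpoints on the same side of it, so a flip is legal as soon
as every other edge has both endpoints on one of the two arcs cut off by the new edge. Measure a matching by
`2 · (number of edges of M_conv it misses) + [σ 0 is unmatched] ≤ 2m + 1`.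
If the unmatched point `σ u` has `u ≠ 0`, flipping it to its partner in `M_conv` creates a hull
edge, lowering the measure by at least one. If `σ 0` is unmatched and `j` is the first missing
edge of `M_conv`, every edge touching `σ 1, …, σ 2j` is an edge of `M_conv`, so `σ 0` can be
flipped to `σ (2j+1)`, again lowering the measure by one. Hence at most `2m + 1` flips lead to
`M_conv`.
-/

/-- Twice the signed area of the triangle `abc`; positive iff `a, b, c` are counterclockwise. -/
def orient (a b c : Pt) : ℝ := (b.1 - a.1) * (c.2 - a.2) - (b.2 - a.2) * (c.1 - a.1)

lemma orient_rotate (a b c : Pt) : orient b c a = orient a b c := by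
  unfold orient; ring

lemma orient_swap (a b c : Pt) : orient a c b = -orient a b c := by
  unfold orient; ring

@[simp] lemma orient_self_left (a b : Pt) : orient a b a = 0 := by
  unfold orient; ring

@[simp] lemma orient_self_right (a b : Pt) : orient a b b = 0 := by
  unfold orient; ring

lemma orient_affineCombination (a b x y : Pt) {t s : ℝ} (hts : t + s = 1) :
    orient a b (t • x + s • y) = t * orient a b x + s * orient a b y := by
  obtain rfl : s = 1 - t := by linarith
  simp only [orient, Prod.fst_add, Prod.snd_add, Prod.smul_fst, Prod.smul_snd, smul_eq_mul]
  ring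

lemma orient_eq_zero_of_mem_openSegment {a b x : Pt} (hx : x ∈ openSegment ℝ a b) :
    orient a b x = 0 := by
  obtain ⟨t, s, -, -, hts, rfl⟩ := hx
  simp [orient_affineCombination a b a b hts]

lemma collinear_of_orient_eq_zero {a b c : Pt} (h : orient a b c = 0) :
    Collinear ℝ ({a, b, c} : Set Pt) := by
  rcases eq_or_ne a b with rfl | hab
  · simpa using collinear_pair ℝ a c
  have hD : (b.1 - a.1) ^ 2 + (b.2 - a.2) ^ 2 ≠ 0 := by
    intro hD
    apply hab
    ext <;> nlinarith [sq_nonneg (b.1 - a.1), sq_nonneg (b.2 - a.2)]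
  rw [collinear_iff_of_mem (Set.mem_insert a _)]
  refine ⟨b - a, ?_⟩
  simp only [Set.mem_insert_iff, Set.mem_singleton_iff, forall_eq_or_imp, forall_eq]
  refine ⟨⟨0, by simp⟩, ⟨1, by simp⟩, ?_⟩
  -- `c - a` is parallel to `b - a`, hence equal to its projection onto `b - a`
  refine ⟨((c.1 - a.1) * (b.1 - a.1) + (c.2 - a.2) * (b.2 - a.2)) /
    ((b.1 - a.1) ^ 2 + (b.2 - a.2) ^ 2), ?_⟩
  unfold orient at h
  ext <;> simp only [vadd_eq_add, Prod.fst_add, Prod.snd_add, Prod.smul_fst, Prod.smul_snd,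
    Prod.fst_sub, Prod.snd_sub, smul_eq_mul] <;> field_simp
  · linear_combination (a.2 - b.2) * h
  · linear_combination (b.1 - a.1) * h

lemma mem_convexHull_triple_of_orient_pos {a b c x : Pt} (h₁ : 0 < orient x b c)
    (h₂ : 0 < orient a x c) (h₃ : 0 < orient a b x) :
    x ∈ convexHull ℝ ({a, b, c} : Set Pt) := by
  -- barycentric coordinates: the three sub-areas, normalised by their sum `orient a b c`
  have hD : orient x b c + orient a x c + orient a b x = orient a b c := by unfold orient; ring
  have hpos : 0 < orient a b c := by linarith
  let w : Fin 3 → ℝ := ![orient x b c / orient a b c, orient a x c / orient a b c,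
    orient a b x / orient a b c]
  let z : Fin 3 → Pt := ![a, b, c]
  have hx : x = ∑ i, w i • z i := by
    simp only [Fin.sum_univ_three, w, z, Matrix.cons_val_zero, Matrix.cons_val_one,
      Matrix.cons_val_two, Matrix.tail_cons, Matrix.head_cons]
    ext <;> simp only [Prod.fst_add, Prod.snd_add, Prod.smul_fst, Prod.smul_snd, smul_eq_mul] <;>
      field_simp <;> unfold orient <;> ring
  rw [hx]
  refine (convex_convexHull ℝ _).sum_mem (fun i _ => ?_) ?_
    (fun i _ => subset_convexHull ℝ _ ?_)
  · fin_cases i <;> simp [w] <;> apply div_nonneg <;> linarith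
  · simp only [Fin.sum_univ_three, w, Matrix.cons_val_zero, Matrix.cons_val_one,
      Matrix.cons_val_two, Matrix.tail_cons, Matrix.head_cons]
    field_simp
    linarith
  · fin_cases i <;> simp [z]

lemma openSegment_inter_openSegment_eq_empty_of_orient {a b c d : Pt}
    (h : (0 < orient a b c ∧ 0 < orient a b d) ∨ (orient a b c < 0 ∧ orient a b d < 0)) :
    openSegment ℝ a b ∩ openSegment ℝ c d = ∅ := by
  refine Set.eq_empty_of_forall_notMem fun x ⟨hab, t, s, ht, hs, hts, hx⟩ => ?_
  have := orient_eq_zero_of_mem_openSegment hab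
  rw [← hx, orient_affineCombination a b c d hts] at this
  rcases h with ⟨hc, hd⟩ | ⟨hc, hd⟩
  · nlinarith [mul_pos ht hc, mul_pos hs hd]
  · nlinarith [mul_neg_of_pos_of_neg ht hc, mul_neg_of_pos_of_neg hs hd]

lemma openSegment_subset_frontier_convexHull {P : Finset Pt} {a b : Pt} (ha : a ∈ P)
    (hb : b ∈ P) (hab : a ≠ b) (hP : ∀ q ∈ P, 0 ≤ orient a b q) :
    openSegment ℝ a b ⊆ frontier (convexHull ℝ (P : Set Pt)) := by
  intro x hx
  have hhalf : convexHull ℝ (P : Set Pt) ⊆ {y | 0 ≤ orient a b y} := by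
    refine convexHull_min hP fun y hy z hz t s ht hs hts => ?_
    simp only [Set.mem_ofPred_eq, orient_affineCombination a b y z hts] at hy hz ⊢
    positivity
  rw [frontier_eq_closure_inter_closure]
  refine ⟨subset_closure <| (convex_convexHull ℝ _).openSegment_subset
    (subset_convexHull ℝ _ ha) (subset_convexHull ℝ _ hb) hx, ?_⟩
  -- moving off the line `ab` to its right leaves the half-plane containing the hull
  let v : Pt := (b.2 - a.2, a.1 - b.1)
  have hv : 0 < (b.1 - a.1) ^ 2 + (b.2 - a.2) ^ 2 := by
    by_contra! hv
    apply hab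
    ext <;> nlinarith [sq_nonneg (b.1 - a.1), sq_nonneg (b.2 - a.2)]
  have hlim : Filter.Tendsto (fun t : ℝ => x + t • v) (nhdsWithin 0 (Set.Ioi 0)) (nhds x) := by
    have : Continuous (fun t : ℝ => x + t • v) := by fun_prop
    simpa using (this.tendsto 0).mono_left nhdsWithin_le_nhds
  refine mem_closure_of_tendsto hlim (eventually_nhdsWithin_of_forall fun t (ht : 0 < t) hxt => ?_)
  have := hhalf hxt
  have hxv : orient a b (x + t • v) = orient a b x - t * ((b.1 - a.1) ^ 2 + (b.2 - a.2) ^ 2) := by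
    simp only [orient, v, Prod.fst_add, Prod.snd_add, Prod.smul_fst, Prod.smul_snd, smul_eq_mul]
    ring
  simp only [Set.mem_ofPred_eq, hxv, orient_eq_zero_of_mem_openSegment hx] at this
  nlinarith [mul_pos ht hv]

lemma orient_pos_of_convexPosition {P : Finset Pt} (hconv : ConvexPosition P)
    (hgp : NoThreeCollinear P) {p a b c : Pt} (hp : p ∈ P) (ha : a ∈ P) (hb : b ∈ P)
    (hc : c ∈ P) (hab : 0 < orient p a b) (hbc : 0 < orient p b c) : 0 < orient a b c := by
  have hne : ∀ {x y z : Pt}, 0 < orient x y z → y ≠ z ∧ z ≠ x := fun h =>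
    ⟨by rintro rfl; simp at h, by rintro rfl; simp at h⟩
  have hac : a ≠ c := by
    rintro rfl
    linarith [orient_swap p a b]
  rcases lt_trichotomy (orient a b c) 0 with hneg | hzero | hpos
  · -- otherwise `b` would lie in the triangle `p a c`
    refine absurd (convexHull_mono ?_ (mem_convexHull_triple_of_orient_pos (a := p) (b := a)
      (c := c) (by linarith [orient_swap a b c, orient_rotate a b c, orient_rotate b a c])
      hbc hab)) (hconv b hb)
    simp only [Set.insert_subset_iff, Set.singleton_subset_iff, coe_erase, Set.mem_sdiff,
      Set.mem_singleton_iff, mem_coe]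
    exact ⟨⟨hp, (hne hab).2.symm⟩, ⟨ha, (hne hab).1⟩, hc, (hne hbc).1.symm⟩
  · exact absurd (collinear_of_orient_eq_zero hzero)
      (hgp a ha b hb c hc (hne hab).1 hac (hne hbc).1)
  · exact hpos

structure IsCcwEnum (P : Finset Pt) (n : ℕ) (σ : ℕ → Pt) : Prop where
  injOn : Set.InjOn σ (Set.Iio n)
  image_range : (range n).image σ = P
  orient_pos : ∀ ⦃i j k⦄, i < j → j < k → k < n → 0 < orient (σ i) (σ j) (σ k)

noncomputable def slopeFrom (p q : Pt) : EReal :=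
  if q.1 = p.1 then ⊤ else (((q.2 - p.2) / (q.1 - p.1) : ℝ) : EReal)

lemma slopeFrom_lt_slopeFrom_iff {p q r : Pt} (hq : toLex p < toLex q) (hr : toLex p < toLex r) :
    slopeFrom p q < slopeFrom p r ↔ 0 < orient p q r := by
  rw [Prod.Lex.toLex_lt_toLex] at hq hr
  unfold slopeFrom orient
  split_ifs with hq1 hr1 hr1
  · simp [hq1, hr1]
  · have : 0 < q.2 - p.2 := by rcases hq with h | h <;> [linarith; linarith [h.2]]
    have : 0 < r.1 - p.1 := by rcases hr with h | h <;> [linarith; exact absurd h.1.symm hr1]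
    simp only [hq1, sub_self, zero_mul, zero_sub, Left.neg_pos_iff, not_top_lt, false_iff, not_lt]
    nlinarith
  · have : 0 < r.2 - p.2 := by rcases hr with h | h <;> [linarith; linarith [h.2]]
    have : 0 < q.1 - p.1 := by rcases hq with h | h <;> [linarith; exact absurd h.1.symm hq1]
    simp only [EReal.coe_lt_top, true_iff, hr1, sub_self, mul_zero]
    nlinarith
  · have : 0 < r.1 - p.1 := by rcases hr with h | h <;> [linarith; exact absurd h.1.symm hr1]
    have : 0 < q.1 - p.1 := by rcases hq with h | h <;> [linarith; exact absurd h.1.symm hq1]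
    rw [EReal.coe_lt_coe_iff, div_lt_div_iff₀ (by linarith) (by linarith)]
    constructor <;> intro h <;> nlinarith

/-- Sort by slope: seen from `p`, the points lexicographically after it lie in a half-plane,
where slope order is counterclockwise order. -/
lemma exists_angularSort {p : Pt} {S : Finset Pt} (hS : ∀ q ∈ S, toLex p < toLex q)
    (hgp : ∀ q ∈ S, ∀ r ∈ S, q ≠ r → orient p q r ≠ 0) :
    ∃ ι : ℕ → Pt, (∀ i < S.card, ι i ∈ S) ∧
      ∀ ⦃i j⦄, i < j → j < S.card → 0 < orient p (ι i) (ι j) := by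
  have hinj : Set.InjOn (slopeFrom p) S := by
    intro q hq r hr hqr
    by_contra hne
    have h₁ := (slopeFrom_lt_slopeFrom_iff (hS q hq) (hS r hr)).not.mp hqr.not_lt
    have h₂ := (slopeFrom_lt_slopeFrom_iff (hS r hr) (hS q hq)).not.mp hqr.symm.not_lt
    exact hgp q hq r hr hne (by linarith [orient_swap p q r])
  let φ := (S.image (slopeFrom p)).orderEmbOfFin (card_image_of_injOn hinj)
  let ι (i : ℕ) :=
    Function.invFunOn (slopeFrom p) S (if h : i < S.card then φ ⟨i, h⟩ else ⊤)
  have hι (i : ℕ) (h : i < S.card) : ι i ∈ S ∧ slopeFrom p (ι i) = φ ⟨i, h⟩ := by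
    simp only [ι, dif_pos h]
    exact Function.invFunOn_pos (mem_image.mp (orderEmbOfFin_mem _ _ _))
  refine ⟨ι, fun i h => (hι i h).1, fun i j hij hj => ?_⟩
  rw [← slopeFrom_lt_slopeFrom_iff (hS _ (hι i (hij.trans hj)).1) (hS _ (hι j hj).1),
    (hι i (hij.trans hj)).2, (hι j hj).2]
  exact φ.strictMono hij

lemma exists_isCcwEnum {P : Finset Pt} (hconv : ConvexPosition P) (hgp : NoThreeCollinear P) :
    ∃ σ, IsCcwEnum P P.card σ := by
  rcases P.eq_empty_or_nonempty with rfl | hP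
  · exact ⟨0, by simp, by simp, by simp⟩
  obtain ⟨p, hp, hmin⟩ := P.exists_min_image toLex hP
  have hS : ∀ q ∈ P.erase p, toLex p < toLex q := fun q hq =>
    (hmin q (mem_of_mem_erase hq)).lt_of_ne (by simpa using (ne_of_mem_erase hq).symm)
  obtain ⟨ι, hιS, hι⟩ := exists_angularSort hS fun q hq r hr hqr h =>
    hgp p hp q (mem_of_mem_erase hq) r (mem_of_mem_erase hr) (ne_of_mem_erase hq).symm
      (ne_of_mem_erase hr).symm hqr (collinear_of_orient_eq_zero h)
  have hcard : P.card = (P.erase p).card + 1 := (card_erase_add_one hp).symm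
  let σ : ℕ → Pt := fun | 0 => p | i + 1 => ι i
  have hσP : ∀ i < P.card, σ i ∈ P := by
    rintro (_ | i) hi
    · exact hp
    · exact mem_of_mem_erase (hιS i (by omega))
  have hσ : ∀ ⦃i j k⦄, i < j → j < k → k < P.card →
      0 < orient (σ i) (σ j) (σ k) := by
    rintro (_ | i) (_ | j) (_ | k) hij hjk hk
    any_goals omega
    · exact hι (by omega) (by omega)
    · exact orient_pos_of_convexPosition hconv hgp hp (hσP (i + 1) (by omega))
        (hσP (j + 1) (by omega)) (hσP (k + 1) (by omega)) (hι (by omega) (by omega))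
        (hι (by omega) (by omega))
  have hinj : Set.InjOn σ (Set.Iio P.card) := by
    have key : ∀ i j, i < j → j < P.card → σ i ≠ σ j := by
      rintro (_ | i) (_ | j) hij hj heq
      · omega
      · exact ne_of_mem_erase (hιS j (by omega)) heq.symm
      · omega
      · have := hι (show i < j by omega) (by omega)
        rw [show ι i = ι j from heq, orient_self_right] at this
        exact this.false
    intro i hi j hj heq
    by_contra hne
    rcases Nat.lt_or_gt_of_ne hne with h | h
    · exact key i j h hj heq
    · exact key j i h hi heq.symm
  refine ⟨σ, hinj, eq_of_subset_of_card_le ?_ ?_, hσ⟩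
  · simpa [image_subset_iff] using hσP
  · rw [card_image_of_injOn (by simpa using hinj), card_range]

/-- The flip that matches the unmatched point `p` to `q` and frees `q`'s former partner `r`. -/
noncomputable def flipAt (M : Finset (Sym2 Pt)) (p q r : Pt) : Finset (Sym2 Pt) :=
  insert s(p, q) (M.erase s(q, r))

lemma unmatched_iff_mem_sdiff {P : Finset Pt} {M : Finset (Sym2 Pt)} {p : Pt} :
    Unmatched P M p ↔ p ∈ P \ M.biUnion Sym2.toFinset := by
  simp [Unmatched, Sym2.mem_toFinset]

namespace IsPAPM

variable {P : Finset Pt} {m : ℕ} {M : Finset (Sym2 Pt)}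

lemma eq_of_mem_of_mem (hM : IsPAPM P m M) {e f : Sym2 Pt} (he : e ∈ M) (hf : f ∈ M) {x : Pt}
    (hxe : x ∈ e) (hxf : x ∈ f) : e = f := by
  by_contra hef
  exact hM.pairwise_disjoint_endpoints e he f hf hef x hxe hxf

lemma card_endpoints (hM : IsPAPM P m M) : (M.biUnion Sym2.toFinset).card = 2 * m := by
  rw [card_biUnion fun e he f hf hef => disjoint_left.mpr fun x hxe hxf =>
    hM.pairwise_disjoint_endpoints e he f hf hef x (Sym2.mem_toFinset.mp hxe)
      (Sym2.mem_toFinset.mp hxf)]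
  rw [sum_congr rfl fun e he => Sym2.card_toFinset_of_not_isDiag e (hM.not_isDiag e he),
    sum_const, hM.card_eq, smul_eq_mul, mul_comm]

lemma card_sdiff_endpoints (hM : IsPAPM P m M) (hP : P.card = 2 * m + 1) :
    (P \ M.biUnion Sym2.toFinset).card = 1 := by
  rw [card_sdiff_of_subset, hP, hM.card_endpoints]
  · omega
  · intro x hx
    obtain ⟨e, he, hxe⟩ := mem_biUnion.mp hx
    exact hM.endpoints_mem e he x (Sym2.mem_toFinset.mp hxe)

lemma exists_unmatched (hM : IsPAPM P m M) (hP : P.card = 2 * m + 1) :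
    ∃ p, Unmatched P M p := by
  obtain ⟨p, hp⟩ := card_pos.mp (hM.card_sdiff_endpoints hP ▸ Nat.one_pos)
  exact ⟨p, unmatched_iff_mem_sdiff.mpr hp⟩

lemma unmatched_unique (hM : IsPAPM P m M) (hP : P.card = 2 * m + 1) {p q : Pt}
    (hp : Unmatched P M p) (hq : Unmatched P M q) : p = q :=
  card_le_one.mp (hM.card_sdiff_endpoints hP).le p (unmatched_iff_mem_sdiff.mp hp) q
    (unmatched_iff_mem_sdiff.mp hq)

lemma exists_partner (hM : IsPAPM P m M) (hP : P.card = 2 * m + 1) {p q : Pt}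
    (hp : Unmatched P M p) (hq : q ∈ P) (hqp : q ≠ p) : ∃ r, s(q, r) ∈ M := by
  by_contra! h
  exact hqp (hM.unmatched_unique hP ⟨hq, fun e he hqe => h _ (Sym2.other_spec hqe ▸ he)⟩ hp)

variable {p q r : Pt}

lemma notMem_of_mem_of_ne (hM : IsPAPM P m M) (hp : Unmatched P M p) (hqr : s(q, r) ∈ M)
    {e : Sym2 Pt} (he : e ∈ M) (hne : e ≠ s(q, r)) : p ∉ e ∧ q ∉ e ∧ r ∉ e :=
  ⟨hp.2 e he, fun hq => hne (hM.eq_of_mem_of_mem he hqr hq (Sym2.mem_mk_left q r)),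
    fun hr => hne (hM.eq_of_mem_of_mem he hqr hr (Sym2.mem_mk_right q r))⟩

lemma ne_of_unmatched (hM : IsPAPM P m M) (hp : Unmatched P M p) (hqr : s(q, r) ∈ M) :
    p ≠ q ∧ p ≠ r ∧ q ≠ r :=
  ⟨by rintro rfl; exact hp.2 _ hqr (Sym2.mem_mk_left _ _),
    by rintro rfl; exact hp.2 _ hqr (Sym2.mem_mk_right _ _),
    fun h => hM.not_isDiag _ hqr (Sym2.mk_isDiag_iff.mpr h)⟩

lemma flip (hM : IsPAPM P m M) (hp : Unmatched P M p) (hqr : s(q, r) ∈ M)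
    (hfree : ∀ e ∈ M, e ≠ s(q, r) → eseg s(p, q) ∩ eseg e = ∅) :
    IsPAPM P m (flipAt M p q r) := by
  obtain ⟨hpq, -, -⟩ := hM.ne_of_unmatched hp hqr
  have hold := fun {e} he hne => hM.notMem_of_mem_of_ne hp hqr (e := e) he hne
  have hmem : ∀ {e}, e ∈ flipAt M p q r ↔ e = s(p, q) ∨ e ≠ s(q, r) ∧ e ∈ M := by
    simp [flipAt]
  have hnew : s(p, q) ∉ M.erase s(q, r) := fun h =>
    hp.2 _ (mem_of_mem_erase h) (Sym2.mem_mk_left _ _)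
  constructor
  · have := hM.card_eq ▸ card_pos.mpr ⟨_, hqr⟩
    rw [flipAt, card_insert_of_notMem hnew, card_erase_of_mem hqr, hM.card_eq]
    omega
  · intro e he x hx
    obtain rfl | ⟨-, he⟩ := hmem.mp he
    · obtain rfl | rfl := Sym2.mem_iff.mp hx
      exacts [hp.1, hM.endpoints_mem _ hqr _ (Sym2.mem_mk_left _ _)]
    · exact hM.endpoints_mem e he x hx
  · intro e he
    obtain rfl | ⟨-, he⟩ := hmem.mp he
    exacts [fun h => hpq (Sym2.mk_isDiag_iff.mp h), hM.not_isDiag e he]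
  · intro e he f hf hef x hxe hxf
    obtain rfl | ⟨hne, heM⟩ := hmem.mp he <;> obtain rfl | ⟨hne', hfM⟩ := hmem.mp hf
    · exact hef rfl
    · obtain h | h := Sym2.mem_iff.mp hxe <;> subst h
      exacts [(hold hfM hne').1 hxf, (hold hfM hne').2.1 hxf]
    · obtain h | h := Sym2.mem_iff.mp hxf <;> subst h
      exacts [(hold heM hne).1 hxe, (hold heM hne).2.1 hxe]
    · exact hM.pairwise_disjoint_endpoints e heM f hfM hef x hxe hxf
  · intro e he f hf hef
    obtain rfl | ⟨hne, he⟩ := hmem.mp he <;> obtain rfl | ⟨hne', hf⟩ := hmem.mp hf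
    · exact absurd rfl hef
    · exact hfree f hf hne'
    · exact Set.inter_comm _ _ ▸ hfree e he hne
    · exact hM.plane e he f hf hef

lemma unmatched_flipAt (hM : IsPAPM P m M) (hp : Unmatched P M p) (hqr : s(q, r) ∈ M) :
    Unmatched P (flipAt M p q r) r := by
  obtain ⟨-, hpr, hqr'⟩ := hM.ne_of_unmatched hp hqr
  refine ⟨hM.endpoints_mem _ hqr r (Sym2.mem_mk_right q r), fun e he hre => ?_⟩
  obtain rfl | he := mem_insert.mp he
  · obtain h | h := Sym2.mem_iff.mp hre
    exacts [hpr h.symm, hqr' h.symm]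
  · exact (hM.notMem_of_mem_of_ne hp hqr (mem_of_mem_erase he) (ne_of_mem_erase he)).2.2 hre

lemma adj_flipAt (hM : IsPAPM P m M) (hp : Unmatched P M p) (hqr : s(q, r) ∈ M)
    (hM' : IsPAPM P m (flipAt M p q r)) : (GM P m).Adj ⟨M, hM⟩ ⟨flipAt M p q r, hM'⟩ := by
  have hnew : s(p, q) ∉ M := fun h => hp.2 _ h (Sym2.mem_mk_left _ _)
  refine ⟨fun h => hnew ?_, ?_⟩
  · rw [Subtype.mk_eq_mk.mp h]
    exact mem_insert_self _ _
  · have : M ∩ flipAt M p q r = M.erase s(q, r) := by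
      ext e
      by_cases he : e = s(p, q) <;> simp [flipAt, he, hnew, and_comm]
    simp only [this, card_erase_of_mem hqr, hM.card_eq]

end IsPAPM

lemma SimpleGraph.exists_walk_length_le_of_descent {V : Type*} (G : SimpleGraph V) (Φ : V → ℕ)
    {t : V} (h : ∀ v, v ≠ t → ∃ w, G.Adj v w ∧ Φ w < Φ v) (v : V) :
    ∃ w : G.Walk v t, w.length ≤ Φ v := by
  induction hv : Φ v using Nat.strong_induction_on generalizing v with
  | _ k ih =>
    by_cases hvt : v = t
    · subst hvt
      exact ⟨.nil, by simp⟩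
    obtain ⟨u, hadj, hlt⟩ := h v hvt
    obtain ⟨w, hw⟩ := ih (Φ u) (hv ▸ hlt) u rfl
    exact ⟨.cons hadj w, by rw [SimpleGraph.Walk.length_cons]; omega⟩

namespace IsCcwEnum

variable {P : Finset Pt} {n : ℕ} {σ : ℕ → Pt}

lemma card_eq (hσ : IsCcwEnum P n σ) : P.card = n := by
  rw [← hσ.image_range, card_image_of_injOn (by simpa using hσ.injOn), card_range]

lemma mem (hσ : IsCcwEnum P n σ) {i : ℕ} (hi : i < n) : σ i ∈ P :=
  hσ.image_range ▸ mem_image_of_mem σ (mem_range.mpr hi)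

lemma exists_eq (hσ : IsCcwEnum P n σ) {p : Pt} (hp : p ∈ P) : ∃ i < n, σ i = p := by
  rw [← hσ.image_range] at hp
  simpa using hp

lemma apply_eq_iff (hσ : IsCcwEnum P n σ) {i j : ℕ} (hi : i < n) (hj : j < n) :
    σ i = σ j ↔ i = j :=
  hσ.injOn.eq_iff hi hj

lemma apply_mem_mk_iff (hσ : IsCcwEnum P n σ) {i x y : ℕ} (hi : i < n) (hx : x < n)
    (hy : y < n) : σ i ∈ s(σ x, σ y) ↔ i = x ∨ i = y := by
  rw [Sym2.mem_iff, hσ.apply_eq_iff hi hx, hσ.apply_eq_iff hi hy]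

lemma orient_pos_of_notMem_Icc (hσ : IsCcwEnum P n σ) {a b k : ℕ} (hab : a < b) (hb : b < n)
    (hk : k < n) (hout : k < a ∨ b < k) : 0 < orient (σ a) (σ b) (σ k) := by
  rcases hout with h | h
  · exact orient_rotate (σ k) (σ a) (σ b) ▸ hσ.orient_pos h hab hb
  · exact hσ.orient_pos hab h hk

lemma orient_neg_of_mem_Ioo (hσ : IsCcwEnum P n σ) {a b k : ℕ} (hak : a < k) (hkb : k < b)
    (hb : b < n) : orient (σ a) (σ b) (σ k) < 0 := by
  linarith [orient_swap (σ a) (σ k) (σ b), hσ.orient_pos hak hkb hb]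

lemma eseg_inter_eq_empty (hσ : IsCcwEnum P n σ) {a b x y : ℕ} (hab : a < b) (hb : b < n)
    (hx : x < n) (hy : y < n)
    (h : (a < x ∧ x < b ∧ a < y ∧ y < b) ∨ ((x < a ∨ b < x) ∧ (y < a ∨ b < y))) :
    eseg s(σ a, σ b) ∩ eseg s(σ x, σ y) = ∅ := by
  refine openSegment_inter_openSegment_eq_empty_of_orient ?_
  rcases h with ⟨hax, hxb, hay, hyb⟩ | ⟨hx', hy'⟩
  · exact .inr ⟨hσ.orient_neg_of_mem_Ioo hax hxb hb, hσ.orient_neg_of_mem_Ioo hay hyb hb⟩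
  · exact .inl ⟨hσ.orient_pos_of_notMem_Icc hab hb hx hx',
      hσ.orient_pos_of_notMem_Icc hab hb hy hy'⟩

lemma exists_eq_mk {m : ℕ} {M : Finset (Sym2 Pt)} (hσ : IsCcwEnum P n σ) (hM : IsPAPM P m M)
    {e : Sym2 Pt} (he : e ∈ M) : ∃ x < n, ∃ y < n, e = s(σ x, σ y) := by
  induction e using Sym2.ind with
  | _ p q =>
    obtain ⟨x, hx, rfl⟩ := hσ.exists_eq (hM.endpoints_mem _ he p (Sym2.mem_mk_left p q))
    obtain ⟨y, hy, rfl⟩ := hσ.exists_eq (hM.endpoints_mem _ he q (Sym2.mem_mk_right _ q))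
    exact ⟨x, hx, y, hy, rfl⟩

end IsCcwEnum

def convEdge (σ : ℕ → Pt) (j : ℕ) : Sym2 Pt := s(σ (2 * j + 1), σ (2 * j + 2))

/-- The paper's `M_conv`; it leaves `σ 0` unmatched. -/
noncomputable def convMatching (σ : ℕ → Pt) (m : ℕ) : Finset (Sym2 Pt) :=
  (range m).image (convEdge σ)

noncomputable def deficit (σ : ℕ → Pt) (m : ℕ) (M : Finset (Sym2 Pt)) : ℕ :=
  #{j ∈ range m | convEdge σ j ∉ M}

open Classical in
noncomputable def flipPotential (P : Finset Pt) (σ : ℕ → Pt) (m : ℕ) (M : Finset (Sym2 Pt)) :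
    ℕ :=
  2 * deficit σ m M + if Unmatched P M (σ 0) then 1 else 0

section Deficit

variable {σ : ℕ → Pt} {m : ℕ} {M : Finset (Sym2 Pt)} {p q r : Pt}

lemma deficit_le : deficit σ m M ≤ m :=
  (card_filter_le _ _).trans (card_range m).le

lemma flipPotential_le (P : Finset Pt) : flipPotential P σ m M ≤ 2 * m + 1 := by
  have := deficit_le (σ := σ) (m := m) (M := M)
  unfold flipPotential
  split_ifs <;> omega

lemma convEdge_mem_flipAt_iff (hqr : ∀ j < m, convEdge σ j ≠ s(q, r)) {j : ℕ} (hj : j < m) :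
    convEdge σ j ∈ flipAt M p q r ↔ convEdge σ j = s(p, q) ∨ convEdge σ j ∈ M := by
  simp [flipAt, hqr j hj]

lemma deficit_flipAt (hqr : ∀ j < m, convEdge σ j ≠ s(q, r))
    (hpq : ∀ j < m, convEdge σ j ≠ s(p, q)) :
    deficit σ m (flipAt M p q r) = deficit σ m M := by
  refine congrArg card (filter_congr fun j hj => ?_)
  rw [mem_range] at hj
  simp [convEdge_mem_flipAt_iff hqr hj, hpq j hj]

lemma deficit_flipAt_add_one (hinj : Set.InjOn (convEdge σ) (Set.Iio m))
    (hqr : ∀ j < m, convEdge σ j ≠ s(q, r)) {j₀ : ℕ} (hj₀ : j₀ < m)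
    (hpq : convEdge σ j₀ = s(p, q)) (hnot : convEdge σ j₀ ∉ M) :
    deficit σ m (flipAt M p q r) + 1 = deficit σ m M := by
  have : {j ∈ range m | convEdge σ j ∉ flipAt M p q r} =
      {j ∈ range m | convEdge σ j ∉ M}.erase j₀ := by
    ext j
    simp only [mem_filter, mem_erase, mem_range]
    by_cases hj : j < m
    · rw [convEdge_mem_flipAt_iff hqr hj, ← hpq, hinj.eq_iff hj hj₀]
      by_cases h : j = j₀ <;> simp [h, hj, hnot]
    · simp [hj]
  rw [deficit, this, card_erase_add_one (by simp [hj₀, hnot]), deficit]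

end Deficit

namespace IsCcwEnum

variable {P : Finset Pt} {m : ℕ} {σ : ℕ → Pt} {M : Finset (Sym2 Pt)}

lemma mem_convEdge_iff (hσ : IsCcwEnum P (2 * m + 1) σ) {i j : ℕ} (hi : i < 2 * m + 1)
    (hj : j < m) : σ i ∈ convEdge σ j ↔ i = 2 * j + 1 ∨ i = 2 * j + 2 :=
  hσ.apply_mem_mk_iff hi (by omega) (by omega)

lemma convEdge_injOn (hσ : IsCcwEnum P (2 * m + 1) σ) : Set.InjOn (convEdge σ) (Set.Iio m) := by
  intro j hj k hk h
  have := (hσ.mem_convEdge_iff (i := 2 * j + 1) (by simp at hj; omega) hk).mp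
    (h ▸ Sym2.mem_mk_left _ _)
  omega

lemma isPAPM_convMatching (hσ : IsCcwEnum P (2 * m + 1) σ) : IsPAPM P m (convMatching σ m) where
  card_eq := by
    rw [convMatching, card_image_of_injOn (by simpa using hσ.convEdge_injOn), card_range]
  endpoints_mem := by
    simp only [convMatching, mem_image, mem_range, forall_exists_index, and_imp,
      forall_apply_eq_imp_iff₂, convEdge, Sym2.mem_iff]
    rintro j hj p (rfl | rfl)
    exacts [hσ.mem (by omega), hσ.mem (by omega)]
  not_isDiag := by
    simp only [convMatching, mem_image, mem_range, forall_exists_index, and_imp,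
      forall_apply_eq_imp_iff₂, convEdge, Sym2.mk_isDiag_iff]
    intro j hj h
    have := (hσ.apply_eq_iff (by omega) (by omega)).mp h
    omega
  pairwise_disjoint_endpoints := by
    simp only [convMatching, mem_image, mem_range, forall_exists_index, and_imp,
      forall_apply_eq_imp_iff₂]
    intro j hj k hk hjk p hpj hpk
    rw [convEdge, Sym2.mem_iff] at hpj
    rcases hpj with rfl | rfl <;>
    · have := (hσ.mem_convEdge_iff (by omega) hk).mp hpk
      exact hjk (by congr 1; omega)
  plane := by
    simp only [convMatching, mem_image, mem_range, forall_exists_index, and_imp,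
      forall_apply_eq_imp_iff₂]
    intro j hj k hk hjk
    have : j ≠ k := fun h => hjk (h ▸ rfl)
    exact hσ.eseg_inter_eq_empty (a := 2 * j + 1) (b := 2 * j + 2) (x := 2 * k + 1)
      (y := 2 * k + 2) (by omega) (by omega) (by omega) (by omega) (.inr (by omega))

lemma convMatching_eseg_subset_frontier (hσ : IsCcwEnum P (2 * m + 1) σ) {e : Sym2 Pt}
    (he : e ∈ convMatching σ m) : eseg e ⊆ frontier (convexHull ℝ (P : Set Pt)) := by
  obtain ⟨j, hj, rfl⟩ := mem_image.mp he
  rw [mem_range] at hj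
  refine openSegment_subset_frontier_convexHull (hσ.mem (by omega)) (hσ.mem (by omega))
    (by rw [Ne, hσ.apply_eq_iff (by omega) (by omega)]; omega) fun q hq => ?_
  obtain ⟨k, hk, rfl⟩ := hσ.exists_eq hq
  by_cases hkj : k = 2 * j + 1 ∨ k = 2 * j + 2
  · rcases hkj with rfl | rfl <;> simp
  · exact (hσ.orient_pos_of_notMem_Icc (by omega) (by omega) hk (by omega)).le

lemma eq_convMatching_of_deficit_eq_zero (hσ : IsCcwEnum P (2 * m + 1) σ)
    (hM : IsPAPM P m M) (h : deficit σ m M = 0) : M = convMatching σ m := by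
  refine (eq_of_subset_of_card_le (fun e he => ?_) ?_).symm
  · obtain ⟨j, hj, rfl⟩ := mem_image.mp he
    by_contra hnot
    exact (card_pos.mpr ⟨j, mem_filter.mpr ⟨hj, hnot⟩⟩).ne' h
  · rw [hM.card_eq, hσ.isPAPM_convMatching.card_eq]

lemma convEdge_ne_of_mem (hσ : IsCcwEnum P (2 * m + 1) σ) {j₀ i : ℕ}
    (hj₀ : j₀ < m) (hnot : convEdge σ j₀ ∉ M) (hi : i = 2 * j₀ + 1 ∨ i = 2 * j₀ + 2)
    {f : Sym2 Pt} (hf : f ∈ M) (hif : σ i ∈ f) {j : ℕ} (hj : j < m) :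
    convEdge σ j ≠ f := by
  rintro rfl
  have := (hσ.mem_convEdge_iff (by omega) hj).mp hif
  obtain rfl : j = j₀ := by omega
  exact hnot hf

/-- The flip from `p = σ u` to the other vertex `σ v` of its convex edge, a hull edge. -/
lemma exists_adj_flipPotential_lt_of_unmatched_ne (hσ : IsCcwEnum P (2 * m + 1) σ)
    (hM : IsPAPM P m M) {p : Pt} (hp : Unmatched P M p) (hp0 : p ≠ σ 0) :
    ∃ M' : {M' // IsPAPM P m M'}, (GM P m).Adj ⟨M, hM⟩ M' ∧
      flipPotential P σ m M'.1 < flipPotential P σ m M := by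
  obtain ⟨u, hu, rfl⟩ := hσ.exists_eq hp.1
  have hu0 : u ≠ 0 := by rintro rfl; exact hp0 rfl
  set j := (u - 1) / 2
  set v := 4 * j + 3 - u
  have huv : (u = 2 * j + 1 ∧ v = 2 * j + 2) ∨ (u = 2 * j + 2 ∧ v = 2 * j + 1) := by omega
  obtain ⟨r, hqr⟩ := hM.exists_partner hσ.card_eq hp (hσ.mem (i := v) (by omega))
    (by rw [Ne, hσ.apply_eq_iff (by omega) hu]; omega)
  have hconv : convEdge σ j = s(σ u, σ v) := by
    rcases huv with ⟨h₁, h₂⟩ | ⟨h₁, h₂⟩ <;> rw [convEdge, ← h₁, ← h₂]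
    exact Sym2.eq_swap
  have hfree : ∀ e ∈ M, e ≠ s(σ v, r) → eseg s(σ u, σ v) ∩ eseg e = ∅ := by
    intro e he hne
    obtain ⟨x, hx, y, hy, rfl⟩ := hσ.exists_eq_mk hM he
    obtain ⟨hue, hve, -⟩ := hM.notMem_of_mem_of_ne hp hqr he hne
    rw [hσ.apply_mem_mk_iff hu hx hy] at hue
    rw [hσ.apply_mem_mk_iff (by omega) hx hy] at hve
    rw [← hconv]
    exact hσ.eseg_inter_eq_empty (by omega) (by omega) hx hy (.inr (by omega))
  have hM' := hM.flip hp hqr hfree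
  refine ⟨⟨_, hM'⟩, hM.adj_flipAt hp hqr hM', ?_⟩
  have hnot : convEdge σ j ∉ M := hconv ▸ fun h => hp.2 _ h (Sym2.mem_mk_left _ _)
  have := deficit_flipAt_add_one (M := M) hσ.convEdge_injOn
    (fun k hk => hσ.convEdge_ne_of_mem (by omega) hnot (by omega) hqr (Sym2.mem_mk_left _ _) hk)
    (by omega) hconv hnot
  dsimp only
  unfold flipPotential
  split_ifs <;> omega

lemma lt_of_mk_mem_of_lt (hσ : IsCcwEnum P (2 * m + 1) σ) (hM : IsPAPM P m M) {j₀ x y : ℕ}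
    (hmin : ∀ j < j₀, convEdge σ j ∈ M) (hj₀ : j₀ < m) (hx : x < 2 * m + 1)
    (hy : y < 2 * m + 1) (he : s(σ x, σ y) ∈ M) (hx0 : 0 < x) (hxj : x < 2 * j₀ + 1) :
    y < 2 * j₀ + 1 := by
  have hjx := hmin ((x - 1) / 2) (by omega)
  have hxconv : σ x ∈ convEdge σ ((x - 1) / 2) :=
    (hσ.mem_convEdge_iff hx (by omega)).mpr (by omega)
  have hy' := (hσ.mem_convEdge_iff hy (by omega)).mp
    (hM.eq_of_mem_of_mem he hjx (Sym2.mem_mk_left _ _) hxconv ▸ Sym2.mem_mk_right _ _)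
  omega

/-- The flip from `σ 0` to the first vertex of the first missing convex edge `j₀`: by
`lt_of_mk_mem_of_lt` the edges before it are convex edges, so no edge crosses the new one. -/
lemma exists_adj_flipPotential_lt_of_unmatched_zero (hσ : IsCcwEnum P (2 * m + 1) σ)
    (hM : IsPAPM P m M) (h0 : Unmatched P M (σ 0)) (hne : M ≠ convMatching σ m) :
    ∃ M' : {M' // IsPAPM P m M'}, (GM P m).Adj ⟨M, hM⟩ M' ∧
      flipPotential P σ m M'.1 < flipPotential P σ m M := by
  obtain ⟨j₀, hj₀T, hmin⟩ := exists_min_image {j ∈ range m | convEdge σ j ∉ M} id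
    (card_pos.mp (Nat.pos_of_ne_zero (mt (hσ.eq_convMatching_of_deficit_eq_zero hM) hne)))
  obtain ⟨hj₀, hnot⟩ := mem_filter.mp hj₀T
  rw [mem_range] at hj₀
  replace hmin : ∀ j < j₀, convEdge σ j ∈ M := fun j hj => by
    by_contra h
    exact absurd (hmin j (mem_filter.mpr ⟨mem_range.mpr (by omega), h⟩)) (by simp; omega)
  obtain ⟨r, hqr⟩ := hM.exists_partner hσ.card_eq h0 (hσ.mem (i := 2 * j₀ + 1) (by omega))
    (by rw [Ne, hσ.apply_eq_iff (by omega) (by omega)]; omega)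
  have hfree : ∀ e ∈ M, e ≠ s(σ (2 * j₀ + 1), r) →
      eseg s(σ 0, σ (2 * j₀ + 1)) ∩ eseg e = ∅ := by
    intro e he hne
    obtain ⟨x, hx, y, hy, rfl⟩ := hσ.exists_eq_mk hM he
    obtain ⟨h0e, hbe, -⟩ := hM.notMem_of_mem_of_ne h0 hqr he hne
    rw [hσ.apply_mem_mk_iff (by omega) hx hy] at h0e hbe
    have hxy := hσ.lt_of_mk_mem_of_lt hM hmin hj₀ hx hy he
    have hyx := hσ.lt_of_mk_mem_of_lt hM hmin hj₀ hy hx (Sym2.eq_swap ▸ he)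
    exact hσ.eseg_inter_eq_empty (by omega) (by omega) hx hy (by omega)
  have hM' := hM.flip h0 hqr hfree
  refine ⟨⟨_, hM'⟩, hM.adj_flipAt h0 hqr hM', ?_⟩
  have hdef := deficit_flipAt (M := M)
    (fun k hk => hσ.convEdge_ne_of_mem hj₀ hnot (.inl rfl) hqr (Sym2.mem_mk_left _ _) hk)
    (fun k hk h => by
      have := (hσ.mem_convEdge_iff (i := 0) (by omega) hk).mp (h ▸ Sym2.mem_mk_left _ _)
      omega)
  have hr0 : ¬ Unmatched P (flipAt M (σ 0) (σ (2 * j₀ + 1)) r) (σ 0) := fun h =>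
    (hM.ne_of_unmatched h0 hqr).2.1
      (hM'.unmatched_unique hσ.card_eq h (hM.unmatched_flipAt h0 hqr))
  simp only [flipPotential, hdef, hr0, h0, if_false, if_true]
  omega

lemma exists_walk_to_convMatching (hσ : IsCcwEnum P (2 * m + 1) σ) (hM : IsPAPM P m M) :
    ∃ w : (GM P m).Walk ⟨M, hM⟩ ⟨convMatching σ m, hσ.isPAPM_convMatching⟩,
      w.length ≤ 2 * m + 1 := by
  have hdescent (M' : {M' // IsPAPM P m M'})
      (hne : M' ≠ ⟨convMatching σ m, hσ.isPAPM_convMatching⟩) :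
      ∃ M'', (GM P m).Adj M' M'' ∧ flipPotential P σ m M''.1 < flipPotential P σ m M'.1 := by
    obtain ⟨p, hp⟩ := M'.2.exists_unmatched hσ.card_eq
    by_cases hp0 : p = σ 0
    · exact hσ.exists_adj_flipPotential_lt_of_unmatched_zero M'.2 (hp0 ▸ hp)
        fun h => hne (Subtype.ext h)
    · exact hσ.exists_adj_flipPotential_lt_of_unmatched_ne M'.2 hp hp0
  obtain ⟨w, hw⟩ := (GM P m).exists_walk_length_le_of_descent _ hdescent ⟨M, hM⟩
  exact ⟨w, hw.trans (flipPotential_le P)⟩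

end IsCcwEnum

/-- For `2m+1` points in convex position there is a plane almost perfect matching
`M_conv` all of whose edges lie on the boundary of the convex hull, such that every
plane almost perfect matching can be flipped to `M_conv` in at most `2n` flips;
consequently the diameter of the flip graph is `O(n)` (at most `4n`). -/
theorem flip_diameter_convex_upper_bound (m : ℕ) (P : Finset Pt)
    (hcard : P.card = 2 * m + 1) (hconv : ConvexPosition P) (hgp : NoThreeCollinear P) :
    ∃ (Mconv : Finset (Sym2 Pt)) (hMconv : IsPAPM P m Mconv),
      (∀ e ∈ Mconv, eseg e ⊆ frontier (convexHull ℝ (P : Set Pt))) ∧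
      (∀ (M₁ : Finset (Sym2 Pt)) (hM₁ : IsPAPM P m M₁),
        ∃ w : (GM P m).Walk ⟨M₁, hM₁⟩ ⟨Mconv, hMconv⟩, w.length ≤ 2 * (2 * m + 1)) ∧
      (∀ (M₁ M₂ : Finset (Sym2 Pt)) (hM₁ : IsPAPM P m M₁) (hM₂ : IsPAPM P m M₂),
        ∃ w : (GM P m).Walk ⟨M₁, hM₁⟩ ⟨M₂, hM₂⟩, w.length ≤ 4 * (2 * m + 1)) := by
  obtain ⟨σ, hσ⟩ := exists_isCcwEnum hconv hgp
  rw [hcard] at hσ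
  have hwalk (M : Finset (Sym2 Pt)) (hM : IsPAPM P m M) :
      ∃ w : (GM P m).Walk ⟨M, hM⟩ ⟨convMatching σ m, hσ.isPAPM_convMatching⟩,
        w.length ≤ 2 * (2 * m + 1) := by
    obtain ⟨w, hw⟩ := hσ.exists_walk_to_convMatching hM
    exact ⟨w, by omega⟩
  refine ⟨convMatching σ m, hσ.isPAPM_convMatching,
    fun e he => hσ.convMatching_eseg_subset_frontier he, hwalk, fun M₁ M₂ hM₁ hM₂ => ?_⟩
  obtain ⟨w₁, hw₁⟩ := hwalk M₁ hM₁
  obtain ⟨w₂, hw₂⟩ := hwalk M₂ hM₂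
  exact ⟨w₁.append w₂.reverse, by simp only [SimpleGraph.Walk.length_append,
    SimpleGraph.Walk.length_reverse]; omega⟩
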